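/- Failure of 1-free interpolation in L*◇_m: the sequent p₃/◇₁(p₁ • ◇₂(p₂/p₂)) ⟨₁ p₁ ⟨₂⟩₂ ⟩₁ ⇒ p₃ is provable in L*◇_m, but there is no unit-free type E such that ⟨₁ p₁ ⟨₂⟩₂ ⟩₁ ⇒ E and p₃/◇₁(p₁ • ◇₂(p₂/p₂)) E ⇒ p₃ are both provable, with σ₁(E) ≤ 1, σ_i(E) = 0 for i ≥ 2, τ₁(E) ≤ 1, τ₂(E) ≤ 1, and τ_i(E) = 0 for i ≥ 3. -/
import Mathlib


/-- Types of the multimodal bracketed Lambek calculus. -/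
inductive ITy where
  | prim : ℕ → ITy
  | ldiv : ITy → ITy → ITy   -- ldiv A B = A \ B
  | rdiv : ITy → ITy → ITy   -- rdiv B A = B / A
  | mul  : ITy → ITy → ITy
  | dia  : ℕ → ITy → ITy
  | box  : ℕ → ITy → ITy
deriving DecidableEq

/-- Type trees: leaves labeled by types, internal nodes are indexed brackets. -/
inductive ITree where
  | leaf : ITy → ITree
  | node : ℕ → List ITree → ITree

abbrev IHedge := List ITree

/-- Contexts: a hedge with one distinguished hole. -/
inductive ICtx where
  | hole : IHedge → IHedge → ICtx
  | brk  : ℕ → ICtx → IHedge → IHedge → ICtx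

/-- Substitution of a hedge for the hole of a context. -/
def ICtx.plug : ICtx → IHedge → IHedge
  | .hole pre post, D => pre ++ D ++ post
  | .brk i c pre post, D => pre ++ (ITree.node i (c.plug D) :: post)

/-- Generators of the free group: primitive types, left brackets, right brackets. -/
abbrev Gen := ℕ ⊕ ℕ ⊕ ℕ

def lb (i : ℕ) : FreeGroup Gen := FreeGroup.of (Sum.inr (Sum.inl i))
def rb (i : ℕ) : FreeGroup Gen := FreeGroup.of (Sum.inr (Sum.inr i))

/-- Free group interpretation of types. -/
def interpTy : ITy → FreeGroup Gen
  | .prim p => FreeGroup.of (Sum.inl p)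
  | .ldiv A B => (interpTy A)⁻¹ * interpTy B
  | .rdiv B A => interpTy B * (interpTy A)⁻¹
  | .mul A B => interpTy A * interpTy B
  | .dia i A => lb i * interpTy A * rb i
  | .box i A => (lb i)⁻¹ * interpTy A * (rb i)⁻¹

mutual
/-- Free group interpretation of type trees. -/
def interpTree : ITree → FreeGroup Gen
  | .leaf A => interpTy A
  | .node i ts => lb i * interpHedge ts * rb i
/-- Free group interpretation of hedges. -/
def interpHedge : List ITree → FreeGroup Gen
  | [] => 1
  | t :: ts => interpTree t * interpHedge ts
end

/-- Length of a type. -/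
def lenTy : ITy → ℕ
  | .prim _ => 1
  | .ldiv A B => lenTy A + lenTy B
  | .rdiv B A => lenTy B + lenTy A
  | .mul A B => lenTy A + lenTy B
  | .dia _ A => lenTy A + 2
  | .box _ A => lenTy A + 2

/-- Number of occurrences of the primitive type `p_i` in a type. -/
def sigmaTy (i : ℕ) : ITy → ℕ
  | .prim p => if p = i then 1 else 0
  | .ldiv A B => sigmaTy i A + sigmaTy i B
  | .rdiv B A => sigmaTy i B + sigmaTy i A
  | .mul A B => sigmaTy i A + sigmaTy i B
  | .dia _ A => sigmaTy i A
  | .box _ A => sigmaTy i A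

/-- Total number of occurrences of `◇_i`, `□↓_i` in a type. -/
def tauTy (i : ℕ) : ITy → ℕ
  | .prim _ => 0
  | .ldiv A B => tauTy i A + tauTy i B
  | .rdiv B A => tauTy i B + tauTy i A
  | .mul A B => tauTy i A + tauTy i B
  | .dia j A => (if j = i then 1 else 0) + tauTy i A
  | .box j A => (if j = i then 1 else 0) + tauTy i A

mutual
def sigmaTree (i : ℕ) : ITree → ℕ
  | .leaf A => sigmaTy i A
  | .node _ ts => sigmaHedge i ts
def sigmaHedge (i : ℕ) : List ITree → ℕ
  | [] => 0
  | t :: ts => sigmaTree i t + sigmaHedge i ts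
end

mutual
/-- Total occurrences of `⟨_i`, `◇_i`, `□↓_i` in a tree. -/
def tauTree (i : ℕ) : ITree → ℕ
  | .leaf A => tauTy i A
  | .node j ts => (if j = i then 1 else 0) + tauHedge i ts
def tauHedge (i : ℕ) : List ITree → ℕ
  | [] => 0
  | t :: ts => tauTree i t + tauHedge i ts
end

def sigmaCtx (i : ℕ) : ICtx → ℕ
  | .hole pre post => sigmaHedge i pre + sigmaHedge i post
  | .brk _ c pre post => sigmaHedge i pre + sigmaCtx i c + sigmaHedge i post

def tauCtx (i : ℕ) : ICtx → ℕ
  | .hole pre post => tauHedge i pre + tauHedge i post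
  | .brk j c pre post => (if j = i then 1 else 0) + tauHedge i pre + tauCtx i c + tauHedge i post
/-- L*◇_m : brackets, empty antecedents allowed. -/
inductive IProvS : IHedge → ITy → Prop where
  | id (p) : IProvS [.leaf (.prim p)] (.prim p)
  | ldivL (G : IHedge) (D : ICtx) (A B C) :
      IProvS G A → IProvS (D.plug [.leaf B]) C →
      IProvS (D.plug (G ++ [.leaf (.ldiv A B)])) C
  | ldivR (Pi : IHedge) (A B) :
      IProvS (.leaf A :: Pi) B → IProvS Pi (.ldiv A B)
  | rdivL (G : IHedge) (D : ICtx) (A B C) :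
      IProvS G A → IProvS (D.plug [.leaf B]) C →
      IProvS (D.plug (.leaf (.rdiv B A) :: G)) C
  | rdivR (Pi : IHedge) (A B) :
      IProvS (Pi ++ [.leaf A]) B → IProvS Pi (.rdiv B A)
  | mulL (G : ICtx) (A B C) :
      IProvS (G.plug [.leaf A, .leaf B]) C → IProvS (G.plug [.leaf (.mul A B)]) C
  | mulR (G D : IHedge) (A B) :
      IProvS G A → IProvS D B → IProvS (G ++ D) (.mul A B)
  | diaL (G : ICtx) (i A B) :
      IProvS (G.plug [.node i [.leaf A]]) B → IProvS (G.plug [.leaf (.dia i A)]) B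
  | diaR (G : IHedge) (i A) :
      IProvS G A → IProvS [.node i G] (.dia i A)
  | boxL (G : ICtx) (i A B) :
      IProvS (G.plug [.leaf A]) B → IProvS (G.plug [.node i [.leaf (.box i A)]]) B
  | boxR (G : IHedge) (i A) :
      IProvS [.node i G] A → IProvS G (.box i A)
  | cut (G : IHedge) (D : ICtx) (A B) :
      IProvS G A → IProvS (D.plug [.leaf A]) B → IProvS (D.plug G) B

/-- The type `p₃/◇₁(p₁ • ◇₂(p₂/p₂))`. -/
def funcTy : ITy :=
  .rdiv (.prim 3) (.dia 1 (.mul (.prim 1) (.dia 2 (.rdiv (.prim 2) (.prim 2)))))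

/-- The hedge `⟨₁ p₁ ⟨₂⟩₂ ⟩₁`. -/
def brkHedge : IHedge := [.node 1 [.leaf (.prim 1), .node 2 []]]

/-! ### A counter-model: tree hedges with an integer flag -/

/-- Semantic trees. -/
inductive MTr where
  | leaf : ℕ → MTr
  | node : ℕ → List MTr → MTr

/-- The distinguished element `⟨₁ p₁ ⟨₂⟩₂ ⟩₁` in the model. -/
def x0 : List MTr := [MTr.node 1 [MTr.leaf 1, MTr.node 2 []]]

/-- Interpretation of primitive types. -/
def baseP : ℕ → List MTr → ℤ → Prop
  | 1, w, k => w = [MTr.leaf 1] ∧ k = 0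
  | 2, w, k => w = [MTr.leaf 2] ∧ k = 0
  | 3, w, k => w = MTr.leaf 3 :: x0 ∧ k = 0
  | _, _, _ => False

/-- Interpretation of types. -/
def semY : ITy → List MTr → ℤ → Prop
  | .prim p, w, k => baseP p w k
  | .ldiv A B, w, k => ∀ v j, semY A v j → semY B (v ++ w) (j + k)
  | .rdiv B A, w, k => ∀ v j, semY A v j → semY B (w ++ v) (k + j)
  | .mul A B, w, k => ∃ w1 k1 w2 k2, semY A w1 k1 ∧ semY B w2 k2 ∧ w = w1 ++ w2 ∧ k = k1 + k2
  | .dia i A, w, k => ∃ v, semY A v k ∧ w = [MTr.node i v]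
  | .box i A, w, k => semY A [MTr.node i w] k

mutual
/-- Interpretation of trees. -/
def semT : ITree → List MTr → ℤ → Prop
  | .leaf A, w, k => semY A w k
  | .node i ts, w, k => ∃ v, semH ts v k ∧ w = [MTr.node i v]
/-- Interpretation of hedges. -/
def semH : IHedge → List MTr → ℤ → Prop
  | [], w, k => w = [] ∧ k = 0
  | t :: ts, w, k => ∃ w1 k1 w2 k2, semT t w1 k1 ∧ semH ts w2 k2 ∧ w = w1 ++ w2 ∧ k = k1 + k2
end

lemma SH_nil {w k} : semH [] w k ↔ (w = [] ∧ k = 0) := by rw [semH]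

lemma SH_cons {t ts w k} :
    semH (t :: ts) w k ↔ ∃ w1 k1 w2 k2, semT t w1 k1 ∧ semH ts w2 k2 ∧ w = w1 ++ w2 ∧ k = k1 + k2 := by
  rw [semH]

lemma ST_leaf {A w k} : semT (ITree.leaf A) w k ↔ semY A w k := by rw [semT]

lemma ST_node {i ts w k} : semT (ITree.node i ts) w k ↔ ∃ v, semH ts v k ∧ w = [MTr.node i v] := by
  rw [semT]

lemma SH_single {t w k} : semH [t] w k ↔ semT t w k := by
  rw [SH_cons]
  constructor
  · rintro ⟨w1, k1, w2, k2, h1, h2, rfl, rfl⟩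
    rw [SH_nil] at h2
    obtain ⟨rfl, rfl⟩ := h2
    simpa using h1
  · intro h
    exact ⟨w, k, [], 0, h, SH_nil.mpr ⟨rfl, rfl⟩, by simp, by ring⟩

lemma SH_append {xs ys : IHedge} {w k} :
    semH (xs ++ ys) w k ↔
      ∃ w1 k1 w2 k2, semH xs w1 k1 ∧ semH ys w2 k2 ∧ w = w1 ++ w2 ∧ k = k1 + k2 := by
  induction xs generalizing w k with
  | nil =>
    simp only [List.nil_append]
    constructor
    · intro h; exact ⟨[], 0, w, k, SH_nil.mpr ⟨rfl, rfl⟩, h, by simp, by ring⟩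
    · rintro ⟨w1, k1, w2, k2, h1, h2, rfl, rfl⟩
      rw [SH_nil] at h1; obtain ⟨rfl, rfl⟩ := h1
      simpa using h2
  | cons t ts ih =>
    rw [List.cons_append, SH_cons]
    constructor
    · rintro ⟨w1, k1, w2, k2, h1, h2, rfl, rfl⟩
      rw [ih] at h2
      obtain ⟨wa, ka, wb, kb, ha, hb, rfl, rfl⟩ := h2
      exact ⟨w1 ++ wa, k1 + ka, wb, kb, SH_cons.mpr ⟨w1, k1, wa, ka, h1, ha, rfl, rfl⟩, hb,
        by simp, by ring⟩
    · rintro ⟨w1, k1, w2, k2, h1, h2, rfl, rfl⟩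
      rw [SH_cons] at h1
      obtain ⟨wa, ka, wb, kb, ha, hb, rfl, rfl⟩ := h1
      exact ⟨wa, ka, wb ++ w2, kb + k2, ha, ih.mpr ⟨wb, kb, w2, k2, hb, h2, rfl, rfl⟩,
        by simp, by ring⟩

/-- Monotonicity of contexts in the hole. -/
lemma SH_mono {Δ Δ' : IHedge} (h : ∀ w k, semH Δ w k → semH Δ' w k) :
    ∀ (D : ICtx) (w : List MTr) (k : ℤ), semH (D.plug Δ) w k → semH (D.plug Δ') w k := by
  intro D
  induction D with
  | hole pre post =>
    intro w k hw
    simp only [ICtx.plug] at hw ⊢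
    rw [SH_append] at hw ⊢
    obtain ⟨w1, k1, w2, k2, h12, h3, rfl, rfl⟩ := hw
    rw [SH_append] at h12
    obtain ⟨wa, ka, wb, kb, ha, hb, rfl, rfl⟩ := h12
    exact ⟨wa ++ wb, ka + kb, w2, k2, SH_append.mpr ⟨wa, ka, wb, kb, ha, h _ _ hb, rfl, rfl⟩,
      h3, rfl, rfl⟩
  | brk i c pre post ih =>
    intro w k hw
    simp only [ICtx.plug] at hw ⊢
    rw [SH_append] at hw ⊢
    obtain ⟨w1, k1, w2, k2, h1, h2, rfl, rfl⟩ := hw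
    rw [SH_cons] at h2
    obtain ⟨wa, ka, wb, kb, ha, hb, rfl, rfl⟩ := h2
    rw [ST_node] at ha
    obtain ⟨v, hv, rfl⟩ := ha
    exact ⟨w1, k1, _, _, h1,
      SH_cons.mpr ⟨_, _, wb, kb, ST_node.mpr ⟨v, ih _ _ hv, rfl⟩, hb, rfl, rfl⟩, rfl, rfl⟩

/-- Soundness of `L*◇_m` with respect to the model. -/
theorem modelSound {Γ : IHedge} {C : ITy} (h : IProvS Γ C) :
    ∀ w k, semH Γ w k → semY C w k := by
  induction h with
  | id p =>
    intro w k hw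
    rw [SH_single, ST_leaf] at hw
    exact hw
  | ldivL G D A B C hG hD ihG ihD =>
    intro w k hw
    refine ihD w k (SH_mono ?_ D w k hw)
    intro w' k' hw'
    rw [SH_append] at hw'
    obtain ⟨w1, k1, w2, k2, h1, h2, rfl, rfl⟩ := hw'
    rw [SH_single, ST_leaf] at h2
    rw [SH_single, ST_leaf]
    exact h2 w1 k1 (ihG _ _ h1)
  | ldivR Pi A B hp ih =>
    intro w k hw
    show ∀ v j, semY A v j → semY B (v ++ w) (j + k)
    intro v j hv
    exact ih _ _ (SH_cons.mpr ⟨v, j, w, k, ST_leaf.mpr hv, hw, rfl, rfl⟩)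
  | rdivL G D A B C hG hD ihG ihD =>
    intro w k hw
    refine ihD w k (SH_mono ?_ D w k hw)
    intro w' k' hw'
    rw [SH_cons] at hw'
    obtain ⟨w1, k1, w2, k2, h1, h2, rfl, rfl⟩ := hw'
    rw [ST_leaf] at h1
    rw [SH_single, ST_leaf]
    exact h1 w2 k2 (ihG _ _ h2)
  | rdivR Pi A B hp ih =>
    intro w k hw
    show ∀ v j, semY A v j → semY B (w ++ v) (k + j)
    intro v j hv
    exact ih _ _ (SH_append.mpr ⟨w, k, v, j, hw, SH_single.mpr (ST_leaf.mpr hv), rfl, rfl⟩)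
  | mulL G A B C hp ih =>
    intro w k hw
    refine ih w k (SH_mono ?_ G w k hw)
    intro w' k' hw'
    rw [SH_single, ST_leaf] at hw'
    obtain ⟨w1, k1, w2, k2, h1, h2, rfl, rfl⟩ := hw'
    exact SH_cons.mpr ⟨w1, k1, w2, k2, ST_leaf.mpr h1,
      SH_single.mpr (ST_leaf.mpr h2), rfl, rfl⟩
  | mulR G D A B hG hD ihG ihD =>
    intro w k hw
    rw [SH_append] at hw
    obtain ⟨w1, k1, w2, k2, h1, h2, rfl, rfl⟩ := hw
    exact ⟨w1, k1, w2, k2, ihG _ _ h1, ihD _ _ h2, rfl, rfl⟩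
  | diaL G i A B hp ih =>
    intro w k hw
    refine ih w k (SH_mono ?_ G w k hw)
    intro w' k' hw'
    rw [SH_single, ST_leaf] at hw'
    obtain ⟨v, hv, rfl⟩ := hw'
    exact SH_single.mpr (ST_node.mpr ⟨v, SH_single.mpr (ST_leaf.mpr hv), rfl⟩)
  | diaR G i A hG ihG =>
    intro w k hw
    rw [SH_single, ST_node] at hw
    obtain ⟨v, hv, rfl⟩ := hw
    exact ⟨v, ihG _ _ hv, rfl⟩
  | boxL G i A B hp ih =>
    intro w k hw
    refine ih w k (SH_mono ?_ G w k hw)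
    intro w' k' hw'
    rw [SH_single, ST_node] at hw'
    obtain ⟨v, hv, rfl⟩ := hw'
    rw [SH_single, ST_leaf] at hv
    exact SH_single.mpr (ST_leaf.mpr hv)
  | boxR G i A hG ihG =>
    intro w k hw
    show semY A [MTr.node i w] k
    exact ihG _ _ (SH_single.mpr (ST_node.mpr ⟨w, hw, rfl⟩))
  | cut G D A B hG hD ihG ihD =>
    intro w k hw
    refine ihD w k (SH_mono ?_ D w k hw)
    intro w' k' hw'
    exact SH_single.mpr (ST_leaf.mpr (ihG _ _ hw'))

/-! ### Flag invariance -/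

/-- A set of the model is invariant if it ignores the flag. -/
def FlagInv (S : List MTr → ℤ → Prop) : Prop := ∀ w k k', S w k → S w k'

/-- Modality chains over `p₁`. -/
inductive Chain : ITy → Prop
  | prim : Chain (.prim 1)
  | dia (i : ℕ) {A : ITy} : Chain A → Chain (.dia i A)
  | box (i : ℕ) {A : ITy} : Chain A → Chain (.box i A)

lemma inv_ldiv_left {A B} (h : FlagInv (semY A)) : FlagInv (semY (.ldiv A B)) := by
  intro w k k' hw v j hv
  have h3 := hw v (j + k' - k) (h v j _ hv)
  rwa [show j + k' - k + k = j + k' by ring] at h3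

lemma inv_ldiv_right {A B} (h : FlagInv (semY B)) : FlagInv (semY (.ldiv A B)) := by
  intro w k k' hw v j hv
  exact h _ _ _ (hw v j hv)

lemma inv_rdiv_left {A B} (h : FlagInv (semY A)) : FlagInv (semY (.rdiv B A)) := by
  intro w k k' hw v j hv
  have h3 := hw v (j + k' - k) (h v j _ hv)
  rwa [show k + (j + k' - k) = k' + j by ring] at h3

lemma inv_rdiv_right {A B} (h : FlagInv (semY B)) : FlagInv (semY (.rdiv B A)) := by
  intro w k k' hw v j hv
  exact h _ _ _ (hw v j hv)

lemma inv_mul_left {A B} (h : FlagInv (semY A)) : FlagInv (semY (.mul A B)) := by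
  rintro w k k' ⟨w1, k1, w2, k2, h1, h2, rfl, rfl⟩
  exact ⟨w1, k' - k2, w2, k2, h _ _ _ h1, h2, rfl, by ring⟩

lemma inv_mul_right {A B} (h : FlagInv (semY B)) : FlagInv (semY (.mul A B)) := by
  rintro w k k' ⟨w1, k1, w2, k2, h1, h2, rfl, rfl⟩
  exact ⟨w1, k1, w2, k' - k1, h1, h _ _ _ h2, rfl, by ring⟩

lemma inv_dia {i A} (h : FlagInv (semY A)) : FlagInv (semY (.dia i A)) := by
  rintro w k k' ⟨v, hv, rfl⟩
  exact ⟨v, h _ _ _ hv, rfl⟩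

lemma inv_box {i A} (h : FlagInv (semY A)) : FlagInv (semY (.box i A)) := by
  intro w k k' hw
  exact h _ _ _ hw

/-- Main dichotomy: a type with no `p_i` (`i ≥ 2`) and at most one `p₁` is either
flag-invariant or a modality chain over `p₁`. -/
lemma dichotomy (A : ITy) (h2 : ∀ i, 2 ≤ i → sigmaTy i A = 0) :
    (sigmaTy 1 A = 0 → FlagInv (semY A)) ∧ (sigmaTy 1 A ≤ 1 → FlagInv (semY A) ∨ Chain A) := by
  induction A with
  | prim p =>
    match p, h2 with
    | 0, _ =>
      refine ⟨fun _ => ?_, fun _ => Or.inl ?_⟩ <;>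
        · rintro w k k' hw
          exact absurd hw (by simp [semY, baseP])
    | 1, _ =>
      constructor
      · intro h; simp [sigmaTy] at h
      · intro _; exact Or.inr Chain.prim
    | (n+2), h2 =>
      exfalso
      have := h2 (n+2) (by omega)
      simp [sigmaTy] at this
  | ldiv A B ihA ihB =>
    have hA2 : ∀ i, 2 ≤ i → sigmaTy i A = 0 := fun i hi => by
      have := h2 i hi; simp [sigmaTy] at this; omega
    have hB2 : ∀ i, 2 ≤ i → sigmaTy i B = 0 := fun i hi => by
      have := h2 i hi; simp [sigmaTy] at this; omega
    have sumeq : sigmaTy 1 (.ldiv A B) = sigmaTy 1 A + sigmaTy 1 B := rfl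
    constructor
    · intro h
      rw [sumeq] at h
      exact inv_ldiv_left ((ihA hA2).1 (by omega))
    · intro h
      rw [sumeq] at h
      rcases Nat.eq_zero_or_pos (sigmaTy 1 A) with h0 | h0
      · exact Or.inl (inv_ldiv_left ((ihA hA2).1 h0))
      · exact Or.inl (inv_ldiv_right ((ihB hB2).1 (by omega)))
  | rdiv B A ihB ihA =>
    have hA2 : ∀ i, 2 ≤ i → sigmaTy i A = 0 := fun i hi => by
      have := h2 i hi; simp [sigmaTy] at this; omega
    have hB2 : ∀ i, 2 ≤ i → sigmaTy i B = 0 := fun i hi => by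
      have := h2 i hi; simp [sigmaTy] at this; omega
    have sumeq : sigmaTy 1 (.rdiv B A) = sigmaTy 1 B + sigmaTy 1 A := rfl
    constructor
    · intro h
      rw [sumeq] at h
      exact inv_rdiv_left ((ihA hA2).1 (by omega))
    · intro h
      rw [sumeq] at h
      rcases Nat.eq_zero_or_pos (sigmaTy 1 A) with h0 | h0
      · exact Or.inl (inv_rdiv_left ((ihA hA2).1 h0))
      · exact Or.inl (inv_rdiv_right ((ihB hB2).1 (by omega)))
  | mul A B ihA ihB =>
    have hA2 : ∀ i, 2 ≤ i → sigmaTy i A = 0 := fun i hi => by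
      have := h2 i hi; simp [sigmaTy] at this; omega
    have hB2 : ∀ i, 2 ≤ i → sigmaTy i B = 0 := fun i hi => by
      have := h2 i hi; simp [sigmaTy] at this; omega
    have sumeq : sigmaTy 1 (.mul A B) = sigmaTy 1 A + sigmaTy 1 B := rfl
    constructor
    · intro h
      rw [sumeq] at h
      exact inv_mul_left ((ihA hA2).1 (by omega))
    · intro h
      rw [sumeq] at h
      rcases Nat.eq_zero_or_pos (sigmaTy 1 A) with h0 | h0
      · exact Or.inl (inv_mul_left ((ihA hA2).1 h0))
      · exact Or.inl (inv_mul_right ((ihB hB2).1 (by omega)))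
  | dia i A ihA =>
    have hA2 : ∀ j, 2 ≤ j → sigmaTy j A = 0 := fun j hj => h2 j hj
    have seq : sigmaTy 1 (.dia i A) = sigmaTy 1 A := rfl
    constructor
    · intro h; rw [seq] at h
      exact inv_dia ((ihA hA2).1 h)
    · intro h; rw [seq] at h
      rcases (ihA hA2).2 h with h' | h'
      · exact Or.inl (inv_dia h')
      · exact Or.inr (Chain.dia i h')
  | box i A ihA =>
    have hA2 : ∀ j, 2 ≤ j → sigmaTy j A = 0 := fun j hj => h2 j hj
    have seq : sigmaTy 1 (.box i A) = sigmaTy 1 A := rfl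
    constructor
    · intro h; rw [seq] at h
      exact inv_box ((ihA hA2).1 h)
    · intro h; rw [seq] at h
      rcases (ihA hA2).2 h with h' | h'
      · exact Or.inl (inv_box h')
      · exact Or.inr (Chain.box i h')

/-- Unary spines over the leaf `1`. -/
inductive Spine : MTr → Prop
  | leaf : Spine (.leaf 1)
  | node (i : ℕ) {t : MTr} : Spine t → Spine (.node i [t])

lemma chain_shape {A : ITy} (h : Chain A) :
    ∀ w k, semY A w k → ∃ t, Spine t ∧ w = [t] ∧ k = 0 := by
  induction h with
  | prim =>
    intro w k hw
    obtain ⟨rfl, rfl⟩ : w = [MTr.leaf 1] ∧ k = 0 := hw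
    exact ⟨MTr.leaf 1, Spine.leaf, rfl, rfl⟩
  | dia i _ ih =>
    rintro w k ⟨v, hv, rfl⟩
    obtain ⟨t, ht, rfl, rfl⟩ := ih _ _ hv
    exact ⟨MTr.node i [t], Spine.node i ht, rfl, rfl⟩
  | box i _ ih =>
    intro w k hw
    obtain ⟨t, ht, heq, rfl⟩ := ih _ _ hw
    obtain rfl : t = MTr.node i w := by
      injection heq with h1 _
      exact h1.symm
    cases ht with
    | node _ ht' => exact ⟨_, ht', rfl, rfl⟩

/-! ### Specific computations in the model -/

/-- The hedge `⟨₁ p₁ ⟨₂⟩₂ ⟩₁` denotes `(x0, 0)`. -/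
lemma SH_brkHedge : semH brkHedge x0 0 := by
  rw [brkHedge, SH_single, ST_node]
  refine ⟨[MTr.leaf 1, MTr.node 2 []], ?_, rfl⟩
  refine SH_cons.mpr ⟨[MTr.leaf 1], 0, [MTr.node 2 []], 0, ST_leaf.mpr ⟨rfl, rfl⟩, ?_, rfl, rfl⟩
  exact SH_single.mpr (ST_node.mpr ⟨[], SH_nil.mpr ⟨rfl, rfl⟩, rfl⟩)

/-- The argument of `funcTy` denotes exactly `(x0, 0)`. -/
lemma arg_exact {v : List MTr} {j : ℤ}
    (h : semY (.dia 1 (.mul (.prim 1) (.dia 2 (.rdiv (.prim 2) (.prim 2))))) v j) :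
    v = x0 ∧ j = 0 := by
  obtain ⟨u, hu, rfl⟩ := h
  obtain ⟨u1, k1, u2, k2, h1, h2, rfl, rfl⟩ := hu
  obtain ⟨rfl, rfl⟩ : u1 = [MTr.leaf 1] ∧ k1 = 0 := h1
  obtain ⟨r, hr, rfl⟩ := h2
  have hr2 := hr [MTr.leaf 2] 0 ⟨rfl, rfl⟩
  obtain ⟨hre, hk2⟩ : r ++ [MTr.leaf 2] = [MTr.leaf 2] ∧ k2 + 0 = 0 := hr2
  have hrnil : r = [] := by
    have := congrArg List.length hre
    simp at this
    exact this
  subst hrnil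
  constructor
  · rfl
  · omega

/-- `funcTy` contains `([leaf 3], 0)`. -/
lemma SP_funcTy : semY funcTy [MTr.leaf 3] 0 := by
  rw [funcTy]
  intro v j hv
  obtain ⟨rfl, rfl⟩ := arg_exact hv
  exact ⟨rfl, rfl⟩

/-- Failure of unit-free interpolation in L*◇_m: the sequent
`p₃/◇₁(p₁ • ◇₂(p₂/p₂)) ⟨₁ p₁ ⟨₂⟩₂ ⟩₁ ⇒ p₃` is provable, but no (unit-free) type `E`
interpolates it at the indicated partition within the stated σ/τ bounds. -/
theorem no_unit_free_interpolant :
    IProvS (ITree.leaf funcTy :: brkHedge) (.prim 3) ∧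
    ¬ ∃ E : ITy,
        IProvS brkHedge E ∧
        IProvS [ITree.leaf funcTy, ITree.leaf E] (.prim 3) ∧
        sigmaTy 1 E ≤ 1 ∧ (∀ i, 2 ≤ i → sigmaTy i E = 0) ∧
        tauTy 1 E ≤ 1 ∧ tauTy 2 E ≤ 1 ∧ (∀ i, 3 ≤ i → tauTy i E = 0) := by
  constructor
  · -- provability of the whole sequent
    have hd : IProvS [ITree.node 2 []] (.dia 2 (.rdiv (.prim 2) (.prim 2))) :=
      IProvS.diaR [] 2 _ (IProvS.rdivR [] _ _ (IProvS.id 2))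
    have hm : IProvS [ITree.leaf (.prim 1), ITree.node 2 []]
        (.mul (.prim 1) (.dia 2 (.rdiv (.prim 2) (.prim 2)))) :=
      IProvS.mulR [ITree.leaf (.prim 1)] [ITree.node 2 []] _ _ (IProvS.id 1) hd
    have hg : IProvS brkHedge
        (.dia 1 (.mul (.prim 1) (.dia 2 (.rdiv (.prim 2) (.prim 2))))) :=
      IProvS.diaR [ITree.leaf (.prim 1), ITree.node 2 []] 1 _ hm
    have hid : IProvS ((ICtx.hole [] []).plug [ITree.leaf (.prim 3)]) (.prim 3) := by
      simpa [ICtx.plug] using IProvS.id 3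
    have := IProvS.rdivL brkHedge (ICtx.hole [] []) _ (.prim 3) (.prim 3) hg hid
    simpa [ICtx.plug, funcTy] using this
  · rintro ⟨E, h1, h2, hs1, hs2, -, -, -⟩
    -- semantic consequences
    have hE0 : semY E x0 0 := modelSound h1 x0 0 SH_brkHedge
    have hEsub : ∀ w k, semY E w k → w = x0 ∧ k = 0 := by
      intro w k hw
      have hseq : semH [ITree.leaf funcTy, ITree.leaf E] (MTr.leaf 3 :: w) (0 + k) :=
        SH_cons.mpr ⟨[MTr.leaf 3], 0, w, k, ST_leaf.mpr SP_funcTy,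
          SH_single.mpr (ST_leaf.mpr hw), rfl, rfl⟩
      have h3 := modelSound h2 _ _ hseq
      obtain ⟨he, hk⟩ : MTr.leaf 3 :: w = MTr.leaf 3 :: x0 ∧ (0 : ℤ) + k = 0 := h3
      refine ⟨?_, by omega⟩
      injection he
    rcases (dichotomy E hs2).2 hs1 with hinv | hchain
    · have := (hEsub x0 1 (hinv x0 0 1 hE0)).2
      omega
    · obtain ⟨t, ht, hx, -⟩ := chain_shape hchain x0 0 hE0
      obtain rfl : t = MTr.node 1 [MTr.leaf 1, MTr.node 2 []] := by
        have h' := hx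
        rw [x0] at h'
        exact (List.cons_eq_cons.mp h'.symm).1
      cases ht
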